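/- arXiv:1704.00487 — 2 statements merged into one kernel-verified Lean document; each statement's English description precedes it below -/
import Mathlib

section
/- Let q be a power of 2, let α ∈ F_q have absolute trace Tr(α) = 1, and let λ₁, λ₂ ∈ F_q be nonzero with Tr(λ₁λ₂) = 0. Then no point of the conic C_{λ₁²} : X₂² + X₂X₃ + αX₃² + λ₁²X₁² = 0 is conjugate, with respect to the pseudo polarity, to any point of the conic C_{λ₂²} : X₂² + X₂X₃ + αX₃² + λ₂²X₁² = 0; that is, for all R = (r₁,r₂,r₃) on C_{λ₁²} and S = (s₁,s₂,s₃) on C_{λ₂²}, one has r₁s₁ + r₃s₂ + r₂s₃ ≠ 0. -/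
/-!
The form `N(x, y) = x² + xy + αy²` is the norm form of `𝔽_q(ω)/𝔽_q`, `ω² + ω + α = 0`, hence
multiplicative, and since `Tr α = 1` it is anisotropic, so points of `C_μ` have `x₁ ≠ 0`.
For conjugate `R ∈ C_{λ₁²}`, `S ∈ C_{λ₂²}`, multiplicativity writes
`N(r₂, r₃) N(s₂, s₃) = (λ₁λ₂r₁s₁)²` as `N(w, r₁s₁)`: the second coordinate is the polar form,
which conjugacy identifies with `r₁s₁`. Dividing by `(r₁s₁)²` gives `t² + t + α = (λ₁λ₂)²`,
and as `t² + t` has trace `0`, `Tr α = Tr(λ₁λ₂) = 0`.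
-/

theorem Algebra.trace_pow_card {K L : Type*} [Field K] [Fintype K] [Field L] [Algebra K L]
    [Algebra.IsAlgebraic K L] (x : L) :
    Algebra.trace K L (x ^ Fintype.card K) = Algebra.trace K L x :=
  Algebra.trace_eq_of_algEquiv (FiniteField.frobeniusAlgEquivOfAlgebraic K L) x

def normForm {R : Type*} [CommRing R] (α x y : R) : R := x ^ 2 + x * y + α * y ^ 2

-- `N(x₁ - x₂ω) · N(y₁ + y₂ + y₂ω)` computed as the norm of the product.
theorem normForm_mul {R : Type*} [CommRing R] (α x₁ x₂ y₁ y₂ : R) :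
    normForm α (x₁ * y₁ + x₁ * y₂ + α * x₂ * y₂) (x₂ * y₁ - x₁ * y₂) =
      normForm α x₁ x₂ * normForm α y₁ y₂ := by
  unfold normForm
  ring

section TraceOverZModTwo

variable {F : Type*} [Field F] [Fintype F] [Algebra (ZMod 2) F]

theorem trace_sq (x : F) : Algebra.trace (ZMod 2) F (x ^ 2) = Algebra.trace (ZMod 2) F x := by
  simpa only [ZMod.card] using Algebra.trace_pow_card (K := ZMod 2) x

theorem trace_sq_add_self (t : F) : Algebra.trace (ZMod 2) F (t ^ 2 + t) = 0 := by
  rw [map_add, trace_sq]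
  exact CharTwo.add_self_eq_zero _

theorem trace_eq_of_normForm_eq_sq {α x y c : F} (hy : y ≠ 0) (h : normForm α x y = c ^ 2) :
    Algebra.trace (ZMod 2) F α = Algebra.trace (ZMod 2) F (c / y) := by
  have hroot : (c / y) ^ 2 = ((x / y) ^ 2 + x / y) + α := by
    unfold normForm at h
    field_simp
    linear_combination -h
  rw [← trace_sq (c / y), hroot, map_add, trace_sq_add_self, zero_add]

theorem eq_zero_of_normForm_eq_zero {α x y : F} (hα : Algebra.trace (ZMod 2) F α = 1)
    (h : normForm α x y = 0) : x = 0 ∧ y = 0 := by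
  by_cases hy : y = 0
  · subst hy
    simpa [normForm] using h
  · have htrace := trace_eq_of_normForm_eq_sq hy (c := 0) (by rw [h, sq, zero_mul])
    rw [hα, zero_div, map_zero] at htrace
    exact absurd htrace one_ne_zero

theorem apply_zero_ne_zero_of_mem_conic {α μ : F} {v : Fin 3 → F}
    (hα : Algebra.trace (ZMod 2) F α = 1) (hv : v ≠ 0)
    (hC : normForm α (v 1) (v 2) + μ * v 0 ^ 2 = 0) : v 0 ≠ 0 := by
  intro h0
  rw [h0, sq, mul_zero, mul_zero, add_zero] at hC
  obtain ⟨h1, h2⟩ := eq_zero_of_normForm_eq_zero hα hC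
  exact hv (funext fun i => by fin_cases i <;> assumption)

end TraceOverZModTwo

theorem conics_non_conjugate_general
    (F : Type) [Field F] [Fintype F] [Algebra (ZMod 2) F]
    (α l₁ l₂ : F) (hα : Algebra.trace (ZMod 2) F α = 1)
    (hl : Algebra.trace (ZMod 2) F (l₁ * l₂) = 0)
    (r s : Fin 3 → F) (hr : r ≠ 0) (hs : s ≠ 0)
    (hrC : r 1 ^ 2 + r 1 * r 2 + α * r 2 ^ 2 + l₁ ^ 2 * r 0 ^ 2 = 0)
    (hsC : s 1 ^ 2 + s 1 * s 2 + α * s 2 ^ 2 + l₂ ^ 2 * s 0 ^ 2 = 0) :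
    r 0 * s 0 + r 2 * s 1 + r 1 * s 2 ≠ 0 := by
  have : CharP F 2 := charP_of_injective_algebraMap' (ZMod 2) 2
  intro hconj
  have hrs : r 0 * s 0 ≠ 0 := mul_ne_zero
    (apply_zero_ne_zero_of_mem_conic hα hr hrC) (apply_zero_ne_zero_of_mem_conic hα hs hsC)
  have hpolar : r 2 * s 1 - r 1 * s 2 = r 0 * s 0 := by
    linear_combination hconj - (r 0 * s 0 + r 1 * s 2) * CharTwo.two_eq_zero (R := F)
  have hnorm : normForm α (r 1 * s 1 + r 1 * s 2 + α * r 2 * s 2) (r 0 * s 0) =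
      (l₁ * l₂ * (r 0 * s 0)) ^ 2 := by
    calc _ = normForm α (r 1 * s 1 + r 1 * s 2 + α * r 2 * s 2) (r 2 * s 1 - r 1 * s 2) := by
          rw [hpolar]
      _ = normForm α (r 1) (r 2) * normForm α (s 1) (s 2) := normForm_mul ..
      _ = _ := by
          unfold normForm
          linear_combination (s 1 ^ 2 + s 1 * s 2 + α * s 2 ^ 2) * hrC - l₁ ^ 2 * r 0 ^ 2 * hsC
  have htrace := trace_eq_of_normForm_eq_sq hrs hnorm
  rw [mul_div_cancel_right₀ _ hrs, hα, hl] at htrace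
  exact one_ne_zero htrace

/-- Let `q = 2ⁿ`, let `α ∈ F_q` have absolute trace `1` and let `l₁, l₂ ∈ F_q` be
nonzero with `Tr(l₁l₂) = 0`. Then no point of the conic
`C_{l₁²} : X₂² + X₂X₃ + αX₃² + l₁²X₁² = 0` is conjugate, with respect to the pseudo
polarity, to any point of the conic `C_{l₂²} : X₂² + X₂X₃ + αX₃² + l₂²X₁² = 0`:
for any representatives `r`, `s` one has `r₁s₁ + r₃s₂ + r₂s₃ ≠ 0`. -/
theorem conics_non_conjugate
    (n : ℕ) (hn : 0 < n)
    (F : Type) [Field F] [Fintype F] [Algebra (ZMod 2) F]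
    (hF : Fintype.card F = 2 ^ n)
    (α l₁ l₂ : F) (hα : Algebra.trace (ZMod 2) F α = 1)
    (hl₁ : l₁ ≠ 0) (hl₂ : l₂ ≠ 0)
    (hl : Algebra.trace (ZMod 2) F (l₁ * l₂) = 0)
    (r s : Fin 3 → F) (hr : r ≠ 0) (hs : s ≠ 0)
    (hrC : r 1 ^ 2 + r 1 * r 2 + α * r 2 ^ 2 + l₁ ^ 2 * r 0 ^ 2 = 0)
    (hsC : s 1 ^ 2 + s 1 * s 2 + α * s 2 ^ 2 + l₂ ^ 2 * s 0 ^ 2 = 0) :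
    r 0 * s 0 + r 2 * s 1 + r 1 * s 2 ≠ 0 :=
  conics_non_conjugate_general F α l₁ l₂ hα hl r s hr hs hrC hsC
end

section
/- Let q be a power of 2. Then there exists a set S of q(q+1)/2 points of PG(2,q), none of which is absolute with respect to the pseudo polarity, such that no three distinct points of S are pairwise conjugate; that is, S induces a triangle-free subgraph of the Erdős–Rényi graph ER_q containing no absolute points. In particular, the independence number of the Erdős–Rényi hypergraph of triangles H_q (the 3-uniform hypergraph whose vertices are the non-absolute points of ER_q and whose edges are the triangles of ER_q) is at least q(q+1)/2. -/
open Projectivization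

/-- Two points of `PG(2,q)`, `q` even, are conjugate with respect to the pseudo polarity
if the bilinear form `p₁q₁ + p₃q₂ + p₂q₃` vanishes (this is independent of the chosen
representatives). -/
def ConjEven {F : Type} [Field F] (P Q : Projectivization F (Fin 3 → F)) : Prop :=
  P.rep 0 * Q.rep 0 + P.rep 2 * Q.rep 1 + P.rep 1 * Q.rep 2 = 0

/-!
In characteristic 2 no affine point `(1 : a : b)` is absolute, and if three affine points
`p, r, s` are pairwise conjugate then `s = p + r` and `s₁s₂ = p₁p₂ + r₁r₂ + 1`. Hence for
an additive subgroup `H` of `F` with `1 ∉ H`, the points `(1 : a : b)` with `ab ∈ H` span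
no triangle. Taking for `H` the kernel of an `𝔽₂`-linear functional that is `1` at `1`, the line
`a = 0` contributes `q` such points and every other value of `a` contributes `q/2`, in total
`q + (q - 1)q/2 = q(q + 1)/2`.
-/

open scoped LinearAlgebra.Projectivization

section AffinePoints

variable {F : Type} [Field F]

noncomputable def affinePoint (p : F × F) : ℙ F (Fin 3 → F) :=
  mk F ![1, p.1, p.2] fun h => one_ne_zero (congrFun h 0)

theorem affinePoint_injective : Function.Injective (affinePoint (F := F)) := by
  intro p r h
  obtain ⟨u, hu⟩ := (mk_eq_mk_iff F _ _ _ _).1 h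
  have hu1 : (u : F) = 1 := by simpa [Units.smul_def] using congrFun hu 0
  simpa [Units.smul_def, hu1, Prod.ext_iff] using
    And.intro (congrFun hu 1).symm (congrFun hu 2).symm

theorem exists_smul_eq_affinePoint_rep (p : F × F) :
    ∃ u : Fˣ, u • ![1, p.1, p.2] = (affinePoint p).rep :=
  exists_smul_eq_mk_rep F _ _

theorem conjEven_affinePoint_iff (p r : F × F) :
    ConjEven (affinePoint p) (affinePoint r) ↔ 1 + p.2 * r.1 + p.1 * r.2 = 0 := by
  obtain ⟨u, hu⟩ := exists_smul_eq_affinePoint_rep p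
  obtain ⟨w, hw⟩ := exists_smul_eq_affinePoint_rep r
  simp only [ConjEven, ← hu, ← hw, Units.smul_def, Pi.smul_apply, smul_eq_mul,
    Matrix.cons_val_zero, Matrix.cons_val_one, Matrix.cons_val_two, Matrix.tail_cons,
    Matrix.head_cons]
  convert mul_eq_zero_iff_left (mul_ne_zero u.ne_zero w.ne_zero) using 2
  ring

end AffinePoints

theorem fst_mul_snd_eq_of_pairwise_conj {R : Type*} [CommRing R] [CharP R 2] {p r s : R × R}
    (hpr : 1 + p.2 * r.1 + p.1 * r.2 = 0) (hrs : 1 + r.2 * s.1 + r.1 * s.2 = 0)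
    (hps : 1 + p.2 * s.1 + p.1 * s.2 = 0) :
    s.1 * s.2 = p.1 * p.2 + r.1 * r.2 + 1 := by
  have htwo : (2 : R) = 0 := CharTwo.two_eq_zero
  -- weighting the three relations by the first coordinate of the missing point doubles every
  -- quadratic term, leaving `p₁ + r₁ + s₁ = 0`; likewise for the second coordinates
  have hs1 : s.1 = p.1 + r.1 := by
    linear_combination r.1 * hps + p.1 * hrs + s.1 * hpr +
      (-p.1 - r.1 - p.2 * r.1 * s.1 - p.1 * r.2 * s.1 - p.1 * r.1 * s.2) * htwo
  have hs2 : s.2 = p.2 + r.2 := by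
    linear_combination r.2 * hps + p.2 * hrs + s.2 * hpr +
      (-p.2 - r.2 - p.2 * r.1 * s.2 - p.1 * r.2 * s.2 - p.2 * r.2 * s.1) * htwo
  rw [hs1, hs2]
  linear_combination hpr - htwo

section CharTwo

variable {F : Type} [Field F] [CharP F 2]

theorem not_conjEven_affinePoint_self (p : F × F) :
    ¬ ConjEven (affinePoint p) (affinePoint p) := by
  rw [conjEven_affinePoint_iff]
  intro h
  exact one_ne_zero (by linear_combination h - p.1 * p.2 * CharTwo.two_eq_zero (R := F))

theorem not_pairwise_conjEven_affinePoint {H : AddSubgroup F} (hH : (1 : F) ∉ H)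
    {p r s : F × F} (hp : p.1 * p.2 ∈ H) (hr : r.1 * r.2 ∈ H) (hs : s.1 * s.2 ∈ H) :
    ¬ (ConjEven (affinePoint p) (affinePoint r) ∧ ConjEven (affinePoint r) (affinePoint s) ∧
      ConjEven (affinePoint p) (affinePoint s)) := by
  simp only [conjEven_affinePoint_iff]
  rintro ⟨hpr, hrs, hps⟩
  have hone : (1 : F) = s.1 * s.2 - p.1 * p.2 - r.1 * r.2 := by
    rw [fst_mul_snd_eq_of_pairwise_conj hpr hrs hps]; ring
  exact hH (hone ▸ H.sub_mem (H.sub_mem hs hp) hr)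

variable (F) in
theorem exists_addSubgroup_index_eq_two_one_notMem :
    ∃ H : AddSubgroup F, H.index = 2 ∧ (1 : F) ∉ H := by
  let _ : Algebra (ZMod 2) F := ZMod.algebra F 2
  obtain ⟨φ, hφ⟩ : ∃ φ : Module.Dual (ZMod 2) F, φ 1 ≠ 0 := by
    by_contra! h
    exact one_ne_zero ((Module.forall_dual_apply_eq_zero_iff (ZMod 2) (1 : F)).1 h)
  have hφ1 : φ 1 = 1 := by
    revert hφ; generalize φ 1 = x; revert x; decide
  refine ⟨(LinearMap.ker φ).toAddSubgroup, ?_, by simpa using hφ⟩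
  rw [AddSubgroup.index_eq_two_iff]
  refine ⟨1, fun b => ?_⟩
  simp only [Submodule.mem_toAddSubgroup, LinearMap.mem_ker, map_add, hφ1]
  generalize φ b = x; revert x; decide

end CharTwo

section Counting

variable {F : Type*} [Field F] [Fintype F]

theorem ncard_mul_mem_addSubgroup (H : AddSubgroup F) :
    {p : F × F | p.1 * p.2 ∈ H}.ncard = Fintype.card F + (Fintype.card F - 1) * Nat.card H := by
  classical
  rw [← Nat.card_coe_set_eq, Set.coe_ofPred,
    Nat.card_congr (Equiv.subtypeProdEquivSigmaSubtype fun a b => a * b ∈ H), Nat.card_sigma,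
    ← Finset.add_sum_erase _ _ (Finset.mem_univ 0)]
  congr 1
  · simp
  · rw [Finset.sum_congr rfl fun a ha => ?_, Finset.sum_const, Finset.card_erase_of_mem
      (Finset.mem_univ 0), Finset.card_univ, smul_eq_mul]
    exact Nat.card_congr
      (Equiv.subtypeEquiv (Equiv.mulLeft₀ a (Finset.ne_of_mem_erase ha)) fun b => Iff.rfl)

theorem ncard_mul_mem_addSubgroup_of_index_eq_two {H : AddSubgroup F} (hH : H.index = 2) :
    {p : F × F | p.1 * p.2 ∈ H}.ncard = Fintype.card F * (Fintype.card F + 1) / 2 := by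
  have hcard : Fintype.card F = Nat.card H * 2 := by
    rw [← hH, H.card_mul_index, Nat.card_eq_fintype_card]
  rw [ncard_mul_mem_addSubgroup, hcard]
  rcases Nat.card H with _ | k
  · simp
  · symm
    apply Nat.div_eq_of_eq_mul_left two_pos
    rw [show (k + 1) * 2 - 1 = 2 * k + 1 by omega]
    ring

end Counting

theorem exists_triangle_free_set_general
    (n q : ℕ) (hq : q = 2 ^ n)
    (F : Type) [Field F] [Fintype F] (hF : Fintype.card F = q) :
    ∃ S : Set (Projectivization F (Fin 3 → F)),
      S.ncard = q * (q + 1) / 2 ∧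
      (∀ P ∈ S, ¬ ConjEven P P) ∧
      (∀ P ∈ S, ∀ Q ∈ S, ∀ R ∈ S, P ≠ Q → Q ≠ R → P ≠ R →
        ¬ (ConjEven P Q ∧ ConjEven Q R ∧ ConjEven P R)) := by
  have : CharP F 2 := charP_of_card_eq_prime_pow (hF.trans hq)
  obtain ⟨H, hH, h1⟩ := exists_addSubgroup_index_eq_two_one_notMem F
  refine ⟨affinePoint '' {p | p.1 * p.2 ∈ H}, ?_, ?_, ?_⟩
  · rw [Set.ncard_image_of_injective _ affinePoint_injective,
      ncard_mul_mem_addSubgroup_of_index_eq_two hH, hF]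
  · rintro _ ⟨p, -, rfl⟩
    exact not_conjEven_affinePoint_self p
  · rintro _ ⟨p, hp, rfl⟩ _ ⟨r, hr, rfl⟩ _ ⟨s, hs, rfl⟩ - - -
    exact not_pairwise_conjEven_affinePoint h1 hp hr hs

/-- Let `q = 2ⁿ`. There is a set `S` of `q(q+1)/2` points of `PG(2,q)`, none of which is
absolute with respect to the pseudo polarity, such that no three distinct points of `S`
are pairwise conjugate; i.e. `S` induces a triangle-free subgraph of `ER_q` with no
absolute points, so the independence number of the Erdős–Rényi hypergraph of triangles
`H_q` is at least `q(q+1)/2`. -/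
theorem exists_triangle_free_set
    (n q : ℕ) (hn : 0 < n) (hq : q = 2 ^ n)
    (F : Type) [Field F] [Fintype F] (hF : Fintype.card F = q) :
    ∃ S : Set (Projectivization F (Fin 3 → F)),
      S.ncard = q * (q + 1) / 2 ∧
      (∀ P ∈ S, ¬ ConjEven P P) ∧
      (∀ P ∈ S, ∀ Q ∈ S, ∀ R ∈ S, P ≠ Q → Q ≠ R → P ≠ R →
        ¬ (ConjEven P Q ∧ ConjEven Q R ∧ ConjEven P R)) :=
  exists_triangle_free_set_general n q hq F hF
end
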